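/- Under the setting of the adaptive constrained Mirror Descent algorithm (sequence x^0,…,x^N in X with productive steps I = {i < N : g(x^i) ≤ ε} using subgradients of f, non-productive steps J = [N]∖I using subgradients of g, stepsizes h_i = ε/M_i² where M_i is the norm of the chosen nonzero subgradient, mirror updates x^{i+1} = argmin_{u∈X}{⟨h_i ∇·(x^i), u⟩ + V(x^i,u)}, and d minimized over X at x^0 with d(x_*) ≤ Θ₀²), the following summed inequality holds: Σ_{i∈I} h_i ( f(x^i) − f(x_*) ) + Σ_{i∈J} h_i ( g(x^i) − g(x_*) ) ≤ (ε/2) Σ_{i∈[N]} h_i + Θ₀². -/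

import Mathlib

/-!
For `w = h_i • ∇_i` every step satisfies the mirror-descent estimate
`⟪w, x_i - x_*⟫ ≤ ‖w‖² / 2 + V(x_i, x_*) - V(x_{i+1}, x_*)`: first-order optimality of the mirror
step together with the three-point identity for `V` bounds `⟪w, x_{i+1} - x_*⟫`, and Cauchy–Schwarz
with `V(x_i, x_{i+1}) ≥ ‖x_{i+1} - x_i‖² / 2` absorbs `⟪w, x_i - x_{i+1}⟫`. The stepsize
`h_i = ε / M_i²` makes `‖w‖² / 2 = ε h_i / 2`, and the subgradient inequality bounds the `i`-th
summand by `⟪w, x_i - x_*⟫`. Summing, the Bregman terms telescope to at most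
`V(x_0, x_*) ≤ d(x_*) - d(x_0) ≤ Θ₀²`, using that `x_0` minimizes `d` on `X`.
-/

open scoped RealInnerProductSpace

open Finset

section FirstOrder

variable {E : Type*} [NormedAddCommGroup E] [NormedSpace ℝ E]

theorem IsMinOn.hasFDerivAt_sub_nonneg {X : Set E} {φ : E → ℝ} {φ' : E →L[ℝ] ℝ} {z u : E}
    (hmin : IsMinOn φ X z) (hX : Convex ℝ X) (hz : z ∈ X) (hu : u ∈ X)
    (hφ : HasFDerivAt φ φ' z) : 0 ≤ φ' (u - z) :=
  hmin.localize.hasFDerivWithinAt_nonneg hφ.hasFDerivWithinAt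
    (sub_mem_posTangentConeAt_of_segment_subset (hX.segment_subset hz hu))

end FirstOrder

section MirrorDescent

variable {E : Type*} [NormedAddCommGroup E] [InnerProductSpace ℝ E]

def bregmanDiv (d : E → ℝ) (Gd : E → E) (x y : E) : ℝ := d y - d x - ⟪Gd x, y - x⟫

theorem bregmanDiv_three_point (d : E → ℝ) (Gd : E → E) (a b z : E) :
    bregmanDiv d Gd a z - bregmanDiv d Gd b z - bregmanDiv d Gd a b
      = ⟪Gd b - Gd a, z - b⟫ := by
  simp only [bregmanDiv, inner_sub_left, inner_sub_right]
  ring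

theorem mul_sub_le_inner_of_subgradient {X : Set E} {φ : E → ℝ} {x y v : E} {t : ℝ}
    (hsub : ∀ z ∈ X, φ x + ⟪v, z - x⟫ ≤ φ z) (hy : y ∈ X) (ht : 0 ≤ t) :
    t * (φ x - φ y) ≤ ⟪t • v, x - y⟫ := by
  have h := hsub y hy
  rw [← neg_sub x y, inner_neg_right] at h
  rw [real_inner_smul_left]
  nlinarith

variable [CompleteSpace E] {X : Set E} {d : E → ℝ} {Gd : E → E}

theorem hasDerivAt_comp_add_smul (hd : ∀ x, HasGradientAt d (Gd x) x) (a u : E) (t : ℝ) :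
    HasDerivAt (fun s : ℝ => d (a + s • u)) ⟪Gd (a + t • u), u⟫ t := by
  have hline : HasDerivAt (fun s : ℝ => a + s • u) u t := by
    simpa using ((hasDerivAt_id t).smul_const u).const_add a
  have h := (hd (a + t • u)).hasFDerivAt.comp_hasDerivAt t hline
  rw [InnerProductSpace.toDual_apply_apply] at h
  exact h

theorem half_sq_norm_le_bregmanDiv (hX : Convex ℝ X) (hd : ∀ x, HasGradientAt d (Gd x) x)
    (hstrong : ∀ x ∈ X, ∀ y ∈ X, ‖x - y‖ ^ 2 ≤ ⟪Gd x - Gd y, x - y⟫)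
    {a b : E} (ha : a ∈ X) (hb : b ∈ X) :
    ‖b - a‖ ^ 2 / 2 ≤ bregmanDiv d Gd a b := by
  set u := b - a
  let φ : ℝ → ℝ := fun t => d (a + t • u) - t * ⟪Gd a, u⟫ - t ^ 2 / 2 * ‖u‖ ^ 2
  have hφ : ∀ t, HasDerivAt φ (⟪Gd (a + t • u), u⟫ - ⟪Gd a, u⟫ - t * ‖u‖ ^ 2) t := by
    intro t
    have hhalf : HasDerivAt (fun s : ℝ => s ^ 2 / 2) t t := by
      simpa using (hasDerivAt_pow 2 t).div_const 2
    exact ((hasDerivAt_comp_add_smul hd a u t).sub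
      ((hasDerivAt_id t).mul_const ⟪Gd a, u⟫ |>.congr_deriv (one_mul _))).sub
      (hhalf.mul_const _)
  have hφ' : ∀ t ∈ interior (Set.Icc (0 : ℝ) 1),
      0 ≤ ⟪Gd (a + t • u), u⟫ - ⟪Gd a, u⟫ - t * ‖u‖ ^ 2 := by
    intro t ht
    rw [interior_Icc] at ht
    have hs := hstrong _ (hX.add_smul_sub_mem ha hb ⟨ht.1.le, ht.2.le⟩) a ha
    rw [add_sub_cancel_left, norm_smul, Real.norm_eq_abs, mul_pow, sq_abs,
      real_inner_smul_right, inner_sub_left] at hs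
    nlinarith [ht.1]
  have hmono : MonotoneOn φ (Set.Icc 0 1) :=
    monotoneOn_of_deriv_nonneg (convex_Icc 0 1)
      (fun t _ => (hφ t).continuousAt.continuousWithinAt)
      (fun t _ => (hφ t).differentiableAt.differentiableWithinAt)
      (fun t ht => (hφ t).deriv ▸ hφ' t ht)
  have h01 := hmono (Set.left_mem_Icc.2 zero_le_one) (Set.right_mem_Icc.2 zero_le_one) zero_le_one
  simp only [φ, zero_smul, one_smul, add_zero, zero_mul, sub_zero, u, add_sub_cancel] at h01
  simp only [bregmanDiv]
  linarith

theorem bregmanDiv_nonneg (hX : Convex ℝ X) (hd : ∀ x, HasGradientAt d (Gd x) x)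
    (hstrong : ∀ x ∈ X, ∀ y ∈ X, ‖x - y‖ ^ 2 ≤ ⟪Gd x - Gd y, x - y⟫)
    {a b : E} (ha : a ∈ X) (hb : b ∈ X) : 0 ≤ bregmanDiv d Gd a b :=
  (by positivity : (0 : ℝ) ≤ ‖b - a‖ ^ 2 / 2).trans
    (half_sq_norm_le_bregmanDiv hX hd hstrong ha hb)

theorem bregmanDiv_le_of_isMinOn (hX : Convex ℝ X) (hd : ∀ x, HasGradientAt d (Gd x) x)
    {x₀ y : E} (hmin : IsMinOn d X x₀) (hx₀ : x₀ ∈ X) (hy : y ∈ X) :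
    bregmanDiv d Gd x₀ y ≤ d y - d x₀ := by
  have hopt := hmin.hasFDerivAt_sub_nonneg hX hx₀ hy (hd x₀).hasFDerivAt
  rw [InnerProductSpace.toDual_apply_apply] at hopt
  simp only [bregmanDiv]
  linarith

theorem inner_sub_le_of_isMinOn_mirror (hX : Convex ℝ X) (hd : ∀ x, HasGradientAt d (Gd x) x)
    (hstrong : ∀ x ∈ X, ∀ y ∈ X, ‖x - y‖ ^ 2 ≤ ⟪Gd x - Gd y, x - y⟫)
    {w a b z : E} (hmin : IsMinOn (fun u => ⟪w, u⟫ + bregmanDiv d Gd a u) X b)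
    (ha : a ∈ X) (hb : b ∈ X) (hz : z ∈ X) :
    ⟪w, a - z⟫ ≤ ‖w‖ ^ 2 / 2 + (bregmanDiv d Gd a z - bregmanDiv d Gd b z) := by
  have hderiv : HasFDerivAt (fun u => ⟪w, u⟫ + bregmanDiv d Gd a u)
      (innerSL ℝ w + ((InnerProductSpace.toDual ℝ E (Gd b) : E →L[ℝ] ℝ) - innerSL ℝ (Gd a)))
      b := by
    have hlin : HasFDerivAt (fun u => ⟪Gd a, u - a⟫) (innerSL ℝ (Gd a)) b := by
      simpa only [innerSL_apply_apply, inner_sub_right] using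
        (innerSL ℝ (Gd a)).hasFDerivAt.sub_const ⟪Gd a, a⟫
    exact (innerSL ℝ w).hasFDerivAt.add (((hd b).hasFDerivAt.sub_const (d a)).sub hlin)
  have hopt := hmin.hasFDerivAt_sub_nonneg hX hb hz hderiv
  simp only [add_apply, sub_apply, innerSL_apply_apply,
    InnerProductSpace.toDual_apply_apply] at hopt
  have hthree := bregmanDiv_three_point d Gd a b z
  have hbreg := half_sq_norm_le_bregmanDiv hX hd hstrong ha hb
  have hcs : ⟪w, a - b⟫ ≤ ‖w‖ * ‖b - a‖ := norm_sub_rev a b ▸ real_inner_le_norm w (a - b)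
  have hsplit : ⟪w, a - z⟫ = ⟪w, a - b⟫ - ⟪w, z - b⟫ := by
    rw [← inner_sub_right]; congr 1; abel
  rw [inner_sub_left] at hthree
  nlinarith [sq_nonneg (‖w‖ - ‖b - a‖)]

end MirrorDescent

theorem div_sq_sq_mul_sq (ε m : ℝ) : (ε / m ^ 2) ^ 2 * m ^ 2 = ε * (ε / m ^ 2) := by
  rcases eq_or_ne m 0 with rfl | hm
  · simp
  · field_simp

theorem sum_range_le_of_le_add_sub_succ {N : ℕ} {a c Φ : ℕ → ℝ}
    (hstep : ∀ i < N, a i ≤ c i + (Φ i - Φ (i + 1))) (hΦ : 0 ≤ Φ N) :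
    ∑ i ∈ range N, a i ≤ ∑ i ∈ range N, c i + Φ 0 := by
  calc ∑ i ∈ range N, a i ≤ ∑ i ∈ range N, (c i + (Φ i - Φ (i + 1))) :=
        sum_le_sum fun i hi => hstep i (mem_range.1 hi)
    _ = ∑ i ∈ range N, c i + (Φ 0 - Φ N) := by rw [sum_add_distrib, sum_range_sub']
    _ ≤ ∑ i ∈ range N, c i + Φ 0 := by linarith

theorem adaptive_md_summed_inequality_general
    {E : Type*} [NormedAddCommGroup E] [InnerProductSpace ℝ E] [CompleteSpace E]
    (X : Set E) (hXcv : Convex ℝ X)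
    (f g : E → ℝ)
    (xstar : E) (hxstarX : xstar ∈ X)
    (d : E → ℝ) (Gd : E → E)
    (hd : ∀ x, HasGradientAt d (Gd x) x)
    (hstrong : ∀ x ∈ X, ∀ y ∈ X, ‖x - y‖ ^ 2 ≤ ⟪Gd x - Gd y, x - y⟫)
    (V : E → E → ℝ) (hV : ∀ x y, V x y = d y - d x - ⟪Gd x, y - x⟫)
    (Θ₀ : ℝ) (hΘ : d xstar ≤ Θ₀ ^ 2)
    (ε : ℝ) (hε : 0 < ε) (N : ℕ)
    (x : ℕ → E) (hxX : ∀ i, x i ∈ X)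
    (hx0 : IsMinOn d X (x 0)) (hd0 : 0 ≤ d (x 0))
    (v : ℕ → E) (M h : ℕ → ℝ)
    (hM : ∀ i, M i = ‖v i‖) (hh : ∀ i, h i = ε / M i ^ 2)
    (hprod : ∀ i < N, g (x i) ≤ ε → ∀ y ∈ X, f (x i) + ⟪v i, y - x i⟫ ≤ f y)
    (hnonprod : ∀ i < N, ε < g (x i) → ∀ y ∈ X, g (x i) + ⟪v i, y - x i⟫ ≤ g y)
    (hstep : ∀ i < N,
      IsMinOn (fun u => ⟪h i • v i, u⟫ + V (x i) u) X (x (i + 1)))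
 :
    letI I := (Finset.range N).filter fun i => g (x i) ≤ ε
    letI J := Finset.range N \ I
    ∑ i ∈ I, h i * (f (x i) - f xstar) + ∑ i ∈ J, h i * (g (x i) - g xstar)
      ≤ ε / 2 * ∑ i ∈ Finset.range N, h i + Θ₀ ^ 2 := by
  obtain rfl : V = bregmanDiv d Gd := funext₂ hV
  have hh_nonneg (i : ℕ) : 0 ≤ h i := hh i ▸ div_nonneg hε.le (sq_nonneg _)
  have hgap : ∀ i < N, (if g (x i) ≤ ε then h i * (f (x i) - f xstar)
      else h i * (g (x i) - g xstar)) ≤ ⟪h i • v i, x i - xstar⟫ := by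
    intro i hi
    split_ifs with hI
    · exact mul_sub_le_inner_of_subgradient (hprod i hi hI) hxstarX (hh_nonneg i)
    · exact mul_sub_le_inner_of_subgradient (hnonprod i hi (not_le.1 hI)) hxstarX (hh_nonneg i)
  have hmirror : ∀ i < N, ⟪h i • v i, x i - xstar⟫ ≤ ε / 2 * h i
      + (bregmanDiv d Gd (x i) xstar - bregmanDiv d Gd (x (i + 1)) xstar) := by
    intro i hi
    have hnorm : ‖h i • v i‖ ^ 2 = ε * h i := by
      rw [norm_smul, mul_pow, Real.norm_of_nonneg (hh_nonneg i), hh, hM, div_sq_sq_mul_sq]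
    have hstep_bound := inner_sub_le_of_isMinOn_mirror hXcv hd hstrong (hstep i hi) (hxX i)
      (hxX (i + 1)) hxstarX
    linarith
  have hinit : bregmanDiv d Gd (x 0) xstar ≤ Θ₀ ^ 2 := by
    linarith [bregmanDiv_le_of_isMinOn hXcv hd hx0 (hxX 0) hxstarX]
  rw [← filter_not, ← sum_ite, mul_sum]
  have hsum := sum_range_le_of_le_add_sub_succ (fun i hi => (hgap i hi).trans (hmirror i hi))
    (bregmanDiv_nonneg hXcv hd hstrong (hxX N) hxstarX)
  linarith

/-- key summed inequality in the proof of Theorem 1.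
Under the setting of the adaptive constrained Mirror Descent algorithm (productive steps
`I = {i < N : g (x i) ≤ ε}` stepping along subgradients of `f`, non-productive steps
`J = [N] \ I` stepping along subgradients of `g`, stepsizes `h i = ε / M i ^ 2`,
mirror updates, `d` minimized over `X` at `x 0` with `d xstar ≤ Θ₀²`), we have
`∑_{i∈I} h i (f (x i) - f xstar) + ∑_{i∈J} h i (g (x i) - g xstar)
  ≤ (ε/2) ∑_{i<N} h i + Θ₀²`. -/
theorem adaptive_md_summed_inequality
    {E : Type*} [NormedAddCommGroup E] [InnerProductSpace ℝ E] [CompleteSpace E]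
    (X : Set E) (hXcl : IsClosed X) (hXcv : Convex ℝ X)
    (f g : E → ℝ) (hf : ConvexOn ℝ X f) (hg : ConvexOn ℝ X g)
    (xstar : E) (hxstarX : xstar ∈ X) (hxstarg : g xstar ≤ 0)
    (hxstaropt : ∀ y ∈ X, g y ≤ 0 → f xstar ≤ f y)
    (d : E → ℝ) (Gd : E → E)
    (hd : ∀ x, HasGradientAt d (Gd x) x) (hGd : Continuous Gd)
    (hstrong : ∀ x ∈ X, ∀ y ∈ X, ‖x - y‖ ^ 2 ≤ ⟪Gd x - Gd y, x - y⟫)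
    (V : E → E → ℝ) (hV : ∀ x y, V x y = d y - d x - ⟪Gd x, y - x⟫)
    (Θ₀ : ℝ) (hΘ : d xstar ≤ Θ₀ ^ 2)
    (ε : ℝ) (hε : 0 < ε) (N : ℕ)
    (x : ℕ → E) (hxX : ∀ i, x i ∈ X)
    (hx0 : IsMinOn d X (x 0)) (hd0 : 0 ≤ d (x 0))
    (v : ℕ → E) (M h : ℕ → ℝ)
    (hM : ∀ i, M i = ‖v i‖) (hh : ∀ i, h i = ε / M i ^ 2)
    (hvne : ∀ i < N, v i ≠ 0)
    (hprod : ∀ i < N, g (x i) ≤ ε → ∀ y ∈ X, f (x i) + ⟪v i, y - x i⟫ ≤ f y)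
    (hnonprod : ∀ i < N, ε < g (x i) → ∀ y ∈ X, g (x i) + ⟪v i, y - x i⟫ ≤ g y)
    (hstep : ∀ i < N,
      IsMinOn (fun u => ⟪h i • v i, u⟫ + V (x i) u) X (x (i + 1)))
 :
    letI I := (Finset.range N).filter fun i => g (x i) ≤ ε
    letI J := Finset.range N \ I
    ∑ i ∈ I, h i * (f (x i) - f xstar) + ∑ i ∈ J, h i * (g (x i) - g xstar)
      ≤ ε / 2 * ∑ i ∈ Finset.range N, h i + Θ₀ ^ 2 :=
  adaptive_md_summed_inequality_general X hXcv f g xstar hxstarX d Gd hd hstrong V hV Θ₀ hΘ ε hε N x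
    hxX hx0 hd0 v M h hM hh hprod hnonprod hstep
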